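/- Any closed walk that covers all pixels of an m×n rectangular grid graph with m, n ≥ 2 makes at least 2·min(m,n) turns, counting U-turns as two. -/

import Mathlib

/-- A pixel is a point of the integer lattice. -/
abbrev Pixel : Type := ℤ × ℤ

/-- A unit step in one of the four axis directions. -/
def IsUnitStep (d : Pixel) : Prop := d = (1, 0) ∨ d = (-1, 0) ∨ d = (0, 1) ∨ d = (0, -1)

/-- A closed walk with `n+1` edge traversals in the integer grid: a cyclic sequence of
vertices, consecutive ones at distance 1. -/
structure GridWalk (n : ℕ) where
  v : ZMod (n + 1) → Pixel
  step : ∀ i, IsUnitStep (v (i + 1) - v i)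

namespace GridWalk

variable {n : ℕ}

/-- Direction of the `i`-th step. -/
def dir (w : GridWalk n) (i : ZMod (n + 1)) : Pixel := w.v (i + 1) - w.v i

/-- Turn cost at a vertex visit with incoming direction `din` and outgoing direction `dout`:
going straight costs 0, a 90° turn costs 1, a U-turn costs 2. -/
def turnCost (din dout : Pixel) : ℕ :=
  if dout = din then 0 else if dout = -din then 2 else 1

/-- Turn cost at the `i`-th vertex visit. -/
def turnAt (w : GridWalk n) (i : ZMod (n + 1)) : ℕ := turnCost (w.dir (i - 1)) (w.dir i)

/-- Total number of turns of the walk (U-turns counting twice). -/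
def turns (w : GridWalk n) : ℕ := ∑ i, w.turnAt i

/-- Number of turns the walk makes at pixels of the set `S` (U-turns counting twice). -/
noncomputable def turnsIn (w : GridWalk n) (S : Set Pixel) : ℕ :=
  ∑ i, S.indicator (fun _ => w.turnAt i) (w.v i)

end GridWalk

/-- A cycle cover of the grid graph with pixel set `P`: a finite collection of closed walks
inside `P` that together visit every pixel of `P`. -/
structure CycleCover (P : Set Pixel) where
  k : ℕ
  len : Fin k → ℕ
  walk : (j : Fin k) → GridWalk (len j)
  mem : ∀ j i, (walk j).v i ∈ P
  covers : ∀ p ∈ P, ∃ j i, (walk j).v i = p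

namespace CycleCover

variable {P : Set Pixel}

/-- Number of turns the cycle cover makes at pixels of the set `S`. -/
noncomputable def turnsIn (C : CycleCover P) (S : Set Pixel) : ℕ :=
  ∑ j, (C.walk j).turnsIn S

/-- Total number of turns of the cycle cover. -/
def totalTurns (C : CycleCover P) : ℕ := ∑ j, (C.walk j).turns

end CycleCover

/-- The horizontal full strip of the grid graph `P` through the pixel `p`: all pixels in the
same row as `p` that are connected to `p` within `P` along that row. -/
def hStrip (P : Set Pixel) (p : Pixel) : Set Pixel :=
  {q | q.2 = p.2 ∧ ∀ x : ℤ, min p.1 q.1 ≤ x → x ≤ max p.1 q.1 → ((x, p.2) : Pixel) ∈ P}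

/-- The vertical full strip of the grid graph `P` through the pixel `p`. -/
def vStrip (P : Set Pixel) (p : Pixel) : Set Pixel :=
  {q | q.1 = p.1 ∧ ∀ y : ℤ, min p.2 q.2 ≤ y → y ≤ max p.2 q.2 → ((p.1, y) : Pixel) ∈ P}

/-- A full strip of the grid graph `P`: a maximal connected collinear set of pixels. -/
def IsFullStrip (P : Set Pixel) (S : Set Pixel) : Prop :=
  ∃ p ∈ P, S = hStrip P p ∨ S = vStrip P p

/-- The m×n rectangular grid graph. -/
def rectGrid (m nn : ℕ) : Set Pixel :=
  {p | 1 ≤ p.1 ∧ p.1 ≤ (m : ℤ) ∧ 1 ≤ p.2 ∧ p.2 ≤ (nn : ℤ)}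

/-!
A horizontal step of the walk in row `r` lies in a maximal run of horizontal steps in that row.
Either the run is the whole walk, which then goes back and forth along the row and, its steps
summing to zero, must reverse somewhere (a U-turn), or it is entered and left through turns at two
distinct visits of row `r`. So every row containing a horizontal step carries two turns, and turns
in distinct rows are distinct. If each of the `n` rows of the grid contains a horizontal step,
this gives `2n` turns; otherwise some row `r` is crossed only vertically, so every one of the `m`
columns has a vertical step at its pixel in row `r`, and the transposed argument gives `2m`.
-/

theorem ZMod.exists_and_not_add_one {N : ℕ} [NeZero N] {p : ZMod N → Prop} {a b : ZMod N}
    (ha : p a) (hb : ¬ p b) : ∃ j, p j ∧ ¬ p (j + 1) := by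
  by_contra! hstep
  have hreach : ∀ k : ℕ, p (a + k) := by
    intro k
    induction k with
    | zero => simpa using ha
    | succ k ih => simpa [add_assoc] using hstep _ ih
  apply hb
  simpa using hreach (b - a).val

namespace IsUnitStep

variable {d e : Pixel}

theorem ne_zero (hd : IsUnitStep d) : d ≠ 0 := by
  rcases hd with rfl | rfl | rfl | rfl <;> decide

theorem fst_eq_zero_or_snd_eq_zero (hd : IsUnitStep d) : d.1 = 0 ∨ d.2 = 0 := by
  rcases hd with rfl | rfl | rfl | rfl <;> simp

theorem eq_neg_of_snd_eq_zero (hd : IsUnitStep d) (he : IsUnitStep e) (hd2 : d.2 = 0)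
    (he2 : e.2 = 0) (hne : e ≠ d) : e = -d := by
  rcases hd with rfl | rfl | rfl | rfl <;> rcases he with rfl | rfl | rfl | rfl <;>
    simp_all

theorem swap (hd : IsUnitStep d) : IsUnitStep d.swap := by
  rcases hd with rfl | rfl | rfl | rfl <;> simp [IsUnitStep]

end IsUnitStep

namespace GridWalk

variable {n : ℕ} (w : GridWalk n)

theorem isUnitStep_dir (i : ZMod (n + 1)) : IsUnitStep (w.dir i) := w.step i

theorem v_add_one (i : ZMod (n + 1)) : w.v (i + 1) = w.v i + w.dir i := by
  simp [dir]

theorem dir_eq_of_turnAt_eq_zero {i : ZMod (n + 1)} (h : w.turnAt i = 0) :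
    w.dir i = w.dir (i - 1) := by
  unfold turnAt turnCost at h
  split_ifs at h with hstraight
  exact hstraight

theorem turnAt_add_one_eq_two {i : ZMod (n + 1)} (h : w.dir (i + 1) = -w.dir i)
    (hne : w.dir (i + 1) ≠ w.dir i) : w.turnAt (i + 1) = 2 := by
  rw [h] at hne
  simp [turnAt, turnCost, h, hne]

theorem sum_dir : ∑ i, w.dir i = 0 := by
  simp only [dir, Finset.sum_sub_distrib, sub_eq_zero]
  exact Equiv.sum_comp (Equiv.addRight (1 : ZMod (n + 1))) w.v

theorem exists_dir_ne (i : ZMod (n + 1)) : ∃ j, w.dir j ≠ w.dir i := by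
  by_contra! hconst
  have hsum := w.sum_dir
  rw [Finset.sum_congr rfl fun j _ => hconst j, Finset.sum_const, Finset.card_univ,
    ZMod.card, smul_eq_zero] at hsum
  exact hsum.elim (Nat.succ_ne_zero n) (w.isUnitStep_dir i).ne_zero

theorem sum_turnAt_le_turnsIn {S : Set Pixel} (T : Finset (ZMod (n + 1)))
    (hT : ∀ i ∈ T, w.v i ∈ S) : ∑ i ∈ T, w.turnAt i ≤ w.turnsIn S := by
  calc ∑ i ∈ T, w.turnAt i = ∑ i ∈ T, S.indicator (fun _ => w.turnAt i) (w.v i) :=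
        Finset.sum_congr rfl fun i hi => (Set.indicator_of_mem (hT i hi) fun _ => w.turnAt i).symm
    _ ≤ w.turnsIn S := Finset.sum_le_sum_of_subset T.subset_univ

theorem sum_turnsIn_le_turns {ι : Type*} (s : Finset ι) (S : ι → Set Pixel)
    (hS : (s : Set ι).PairwiseDisjoint S) : ∑ r ∈ s, w.turnsIn (S r) ≤ w.turns := by
  unfold turnsIn turns
  rw [Finset.sum_comm]
  refine Finset.sum_le_sum fun i _ => ?_
  rw [← Finset.indicator_biUnion_apply s S hS]
  exact Set.indicator_le_self' (fun _ _ => Nat.zero_le _) _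

def IsRowStep (r : ℤ) (j : ZMod (n + 1)) : Prop := (w.v j).2 = r ∧ (w.dir j).2 = 0

variable {w} {r : ℤ} {j : ZMod (n + 1)}

theorem IsRowStep.snd_v_add_one (hj : w.IsRowStep r j) : (w.v (j + 1)).2 = r := by
  simp [w.v_add_one, hj.1, hj.2]

theorem IsRowStep.add_one (hj : w.IsRowStep r j) (h0 : w.turnAt (j + 1) = 0) :
    w.IsRowStep r (j + 1) := by
  have hdir := w.dir_eq_of_turnAt_eq_zero h0
  rw [add_sub_cancel_right] at hdir
  exact ⟨hj.snd_v_add_one, hdir ▸ hj.2⟩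

theorem IsRowStep.sub_one (hj : w.IsRowStep r j) (h0 : w.turnAt j = 0) :
    w.IsRowStep r (j - 1) := by
  have hdir := w.dir_eq_of_turnAt_eq_zero h0
  have hv := congrArg Prod.snd (w.v_add_one (j - 1))
  rw [sub_add_cancel, Prod.snd_add, ← hdir, hj.2, add_zero, hj.1] at hv
  exact ⟨hv.symm, hdir ▸ hj.2⟩

variable (w)

theorem two_le_turnsIn_row_of_forall_isRowStep (hall : ∀ j, w.IsRowStep r j) :
    2 ≤ w.turnsIn {p | p.2 = r} := by
  obtain ⟨j', hj'⟩ := w.exists_dir_ne 0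
  obtain ⟨j, hj, hj1⟩ := ZMod.exists_and_not_add_one (p := fun j => w.dir j = w.dir 0) rfl hj'
  have hne : w.dir (j + 1) ≠ w.dir j := hj ▸ hj1
  have hrev := (w.isUnitStep_dir j).eq_neg_of_snd_eq_zero (w.isUnitStep_dir (j + 1))
    (hall j).2 (hall (j + 1)).2 hne
  calc 2 = ∑ k ∈ {j + 1}, w.turnAt k := by simp [w.turnAt_add_one_eq_two hrev hne]
    _ ≤ _ := w.sum_turnAt_le_turnsIn _ fun k hk => by
      rw [Finset.mem_singleton.mp hk]
      exact (hall _).1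

theorem two_le_turnsIn_row (hi : w.IsRowStep r j) : 2 ≤ w.turnsIn {p | p.2 = r} := by
  by_cases hall : ∀ j, w.IsRowStep r j
  · exact w.two_le_turnsIn_row_of_forall_isRowStep hall
  push Not at hall
  obtain ⟨b, hb⟩ := hall
  obtain ⟨j₁, hj₁, hj₁'⟩ := ZMod.exists_and_not_add_one hi hb
  obtain ⟨j₂, hj₂, hj₂'⟩ := ZMod.exists_and_not_add_one (p := fun j => ¬ w.IsRowStep r j) hb
    (not_not.mpr hi)
  rw [not_not] at hj₂'
  have hleave : w.turnAt (j₁ + 1) ≠ 0 := fun h0 => hj₁' (hj₁.add_one h0)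
  have henter : w.turnAt (j₂ + 1) ≠ 0 := fun h0 => hj₂ (by simpa using hj₂'.sub_one h0)
  have hne : j₁ + 1 ≠ j₂ + 1 := fun h => hj₁' (h ▸ hj₂')
  calc 2 ≤ ∑ k ∈ {j₁ + 1, j₂ + 1}, w.turnAt k := by rw [Finset.sum_pair hne]; omega
    _ ≤ _ := w.sum_turnAt_le_turnsIn _ fun k hk => by
      rcases Finset.mem_insert.mp hk with rfl | hk
      · exact hj₁.snd_v_add_one
      rw [Finset.mem_singleton.mp hk]
      exact hj₂'.1

theorem two_mul_card_le_turns (s : Finset ℤ)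
    (hs : ∀ r ∈ s, ∃ i, w.IsRowStep r i) : 2 * s.card ≤ w.turns := by
  choose! start hstart using hs
  calc 2 * s.card = ∑ r ∈ s, 2 := by rw [Finset.sum_const, smul_eq_mul, mul_comm]
    _ ≤ ∑ r ∈ s, w.turnsIn {p | p.2 = r} := Finset.sum_le_sum fun r hr =>
        w.two_le_turnsIn_row (hstart r hr)
    _ ≤ w.turns := w.sum_turnsIn_le_turns s _ fun r _ r' _ hrr' =>
        Set.disjoint_left.mpr fun p hp hp' => hrr' (hp.symm.trans hp')

def transpose : GridWalk n where
  v i := (w.v i).swap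
  step i := (w.step i).swap

theorem transpose_dir (i : ZMod (n + 1)) : w.transpose.dir i = (w.dir i).swap := rfl

theorem turnCost_swap (d e : Pixel) : turnCost d.swap e.swap = turnCost d e := by
  simp only [turnCost, Prod.swap_inj, ← Prod.swap_neg]

theorem turns_transpose : w.transpose.turns = w.turns := by
  simp only [turns, turnAt, transpose_dir, turnCost_swap]

end GridWalk

theorem rect_lower_bound_general (m nn : ℕ) (k : ℕ) (w : GridWalk k)
    (hcov : ∀ p ∈ rectGrid m nn, ∃ i, w.v i = p) :
    2 * min m nn ≤ w.turns := by
  by_cases hrows : ∀ r ∈ Finset.Icc (1 : ℤ) nn, ∃ i, w.IsRowStep r i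
  · have := w.two_mul_card_le_turns _ hrows
    simp only [Int.card_Icc, add_sub_cancel_right, Int.toNat_natCast] at this
    omega
  · push Not at hrows
    obtain ⟨r, hr, hno_row_step⟩ := hrows
    rw [Finset.mem_Icc] at hr
    have hcols : ∀ c ∈ Finset.Icc (1 : ℤ) m,
        ∃ i, w.transpose.IsRowStep c i := fun c hc => by
      rw [Finset.mem_Icc] at hc
      obtain ⟨i, hi⟩ := hcov (c, r) ⟨hc.1, hc.2, hr.1, hr.2⟩
      exact ⟨i, by simp [GridWalk.transpose, hi],
        (w.isUnitStep_dir i).fst_eq_zero_or_snd_eq_zero.resolve_right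
          fun h => hno_row_step i ⟨by simp [hi], h⟩⟩
    have := w.transpose.two_mul_card_le_turns _ hcols
    simp only [Int.card_Icc, add_sub_cancel_right, Int.toNat_natCast, w.turns_transpose] at this
    omega

/-- any closed walk covering all pixels of the m×n rectangular grid graph with
m, n ≥ 2 makes at least 2·min(m,n) turns (U-turns counting as two). -/
theorem rect_lower_bound (m nn : ℕ) (hm : 2 ≤ m) (hn : 2 ≤ nn) (k : ℕ) (w : GridWalk k)
    (hmem : ∀ i, w.v i ∈ rectGrid m nn) (hcov : ∀ p ∈ rectGrid m nn, ∃ i, w.v i = p) :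
    2 * min m nn ≤ w.turns :=
  rect_lower_bound_general m nn k w hcov
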